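/- Let ω ∈ ℂ with Re ω > 0, c > 0, and f : (0,∞) → ℂ continuous with compact support. Define u(y) = ∫₀^∞ k(y,s) f(s) ds − e^{−ω y/√c} b, where k(y,s) = (1/(2ω√c))(e^{−ω|y−s|/√c} − e^{−ω(y+s)/√c}) and b ∈ ℂ. Then u'(0) = (1/c) ∫₀^∞ e^{−ω s/√c} f(s) ds + (ω/√c) b. -/

import Mathlib

/-!
Since `0 ∉ tsupport f` and the topological support is closed, `f` vanishes on some `[0, ε)`.
For `y < ε ≤ s` the kernel separates as `k(y,s) = sinh(ωy/√c) e^{−ωs/√c} / (ω√c)`, so near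
`y = 0` the solution is `u(y) = sinh(ωy/√c) I / (ω√c) − e^{−ωy/√c} b` with
`I = ∫₀^∞ e^{−ωs/√c} f(s) ds`, and differentiating this closed form at `0` gives the claim.
-/

open Real MeasureTheory

noncomputable def greenK (ω : ℂ) (c : ℝ) (y s : ℝ) : ℂ :=
  (1 / (2 * ω * (Real.sqrt c : ℂ))) *
    (Complex.exp (-ω * (|y - s| : ℝ) / (Real.sqrt c : ℂ))
      - Complex.exp (-ω * ((y + s : ℝ) : ℂ) / (Real.sqrt c : ℂ)))

open Filter Topology Set

theorem exists_pos_tsupport_subset_Ici {M : Type*} [Zero M] {f : ℝ → M}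
    (hf : tsupport f ⊆ Ioi 0) : ∃ ε > 0, tsupport f ⊆ Ici ε := by
  have h0 : (tsupport f)ᶜ ∈ 𝓝 (0 : ℝ) :=
    (isClosed_tsupport f).isOpen_compl.mem_nhds fun h => lt_irrefl (0 : ℝ) (hf h)
  obtain ⟨ε, hε, hball⟩ := Metric.mem_nhds_iff.mp h0
  refine ⟨ε, hε, fun s hs => ?_⟩
  have hs_pos : 0 < s := hf hs
  by_contra! hlt
  exact hball (by simpa [abs_of_pos hs_pos] using hlt) hs

theorem greenK_of_le (ω : ℂ) (c : ℝ) {y s : ℝ} (h : y ≤ s) :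
    greenK ω c y s = 1 / (2 * ω * (√c : ℂ)) *
      (Complex.exp (ω * (y : ℂ) / √c) - Complex.exp (-ω * (y : ℂ) / √c)) *
        Complex.exp (-ω * (s : ℂ) / √c) := by
  have hs : -ω * ((s - y : ℝ) : ℂ) / √c = ω * (y : ℂ) / √c + -ω * (s : ℂ) / √c := by
    push_cast; ring
  have hys : -ω * ((y + s : ℝ) : ℂ) / √c = -ω * (y : ℂ) / √c + -ω * (s : ℂ) / √c := by
    push_cast; ring
  rw [greenK, abs_sub_comm, abs_of_nonneg (sub_nonneg.mpr h), hs, hys,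
    Complex.exp_add, Complex.exp_add]
  ring

theorem integral_greenK_mul_eventuallyEq (ω : ℂ) (c : ℝ) {f : ℝ → ℂ}
    (hf : tsupport f ⊆ Ioi 0) :
    (fun y : ℝ => ∫ s in Ioi (0 : ℝ), greenK ω c y s * f s) =ᶠ[𝓝 0] fun y : ℝ =>
      1 / (2 * ω * (√c : ℂ)) *
        (Complex.exp (ω * (y : ℂ) / √c) - Complex.exp (-ω * (y : ℂ) / √c)) *
        ∫ s in Ioi (0 : ℝ), Complex.exp (-ω * (s : ℂ) / √c) * f s := by
  obtain ⟨ε, hε, hfε⟩ := exists_pos_tsupport_subset_Ici hf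
  filter_upwards [Iio_mem_nhds hε] with y (hy : y < ε)
  rw [← integral_const_mul]
  refine integral_congr_ae (Eventually.of_forall fun s => ?_)
  by_cases hfs : f s = 0
  · simp [hfs]
  · have hys : y ≤ s := hy.le.trans (hfε (subset_tsupport f hfs))
    simp only [greenK_of_le ω c hys, mul_assoc]

theorem hasDerivAt_cexp_mul_ofReal_div (a d : ℂ) :
    HasDerivAt (fun y : ℝ => Complex.exp (a * y / d)) (a / d) 0 := by
  have hid : HasDerivAt (fun y : ℝ => (y : ℂ)) 1 0 := by
    simpa using (hasDerivAt_id (0 : ℝ)).ofReal_comp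
  simpa using ((hid.const_mul a).div_const d).cexp

theorem stmt7_general (ω : ℂ) (hω : 0 < ω.re) (c : ℝ) (hc : 0 < c) (b : ℂ)
    (f : ℝ → ℂ)
    (hsupp0 : tsupport f ⊆ Set.Ioi (0 : ℝ)) :
    deriv (fun y : ℝ =>
        (∫ s in Set.Ioi (0 : ℝ), greenK ω c y s * f s)
          - Complex.exp (-ω * (y : ℂ) / (Real.sqrt c : ℂ)) * b) 0
      = (1 / (c : ℂ)) * (∫ s in Set.Ioi (0 : ℝ),
          Complex.exp (-ω * (s : ℂ) / (Real.sqrt c : ℂ)) * f s)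
        + (ω / (Real.sqrt c : ℂ)) * b := by
  have hω0 : ω ≠ 0 := fun h => by simp [h] at hω
  have hsqrt : (√c : ℂ) ≠ 0 := Complex.ofReal_ne_zero.mpr (Real.sqrt_pos.mpr hc).ne'
  have hsqrt_sq : (√c : ℂ) * √c = c := by
    rw [← Complex.ofReal_mul, Real.mul_self_sqrt hc.le]
  set I := ∫ s in Ioi (0 : ℝ), Complex.exp (-ω * (s : ℂ) / √c) * f s
  have hu := (((hasDerivAt_cexp_mul_ofReal_div ω √c).sub
    (hasDerivAt_cexp_mul_ofReal_div (-ω) √c)).const_mul (1 / (2 * ω * (√c : ℂ)))).mul_const I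
    |>.sub ((hasDerivAt_cexp_mul_ofReal_div (-ω) √c).mul_const b)
  rw [(hu.congr_of_eventuallyEq ?_).deriv, ← hsqrt_sq]
  · field_simp
    ring
  filter_upwards [integral_greenK_mul_eventuallyEq ω c hsupp0] with y hy
  simp only [hy, Pi.sub_apply, I]

/-- Boundary derivative formula: for `u(y) = ∫₀^∞ k(y,s) f(s) ds − e^{−ωy/√c} b` one has
`u'(0) = (1/c)∫₀^∞ e^{−ωs/√c} f(s) ds + (ω/√c) b`. -/
theorem stmt7 (ω : ℂ) (hω : 0 < ω.re) (c : ℝ) (hc : 0 < c) (b : ℂ)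
    (f : ℝ → ℂ) (hf : Continuous f) (hsupp : HasCompactSupport f)
    (hsupp0 : tsupport f ⊆ Set.Ioi (0 : ℝ)) :
    deriv (fun y : ℝ =>
        (∫ s in Set.Ioi (0 : ℝ), greenK ω c y s * f s)
          - Complex.exp (-ω * (y : ℂ) / (Real.sqrt c : ℂ)) * b) 0
      = (1 / (c : ℂ)) * (∫ s in Set.Ioi (0 : ℝ),
          Complex.exp (-ω * (s : ℂ) / (Real.sqrt c : ℂ)) * f s)
        + (ω / (Real.sqrt c : ℂ)) * b :=
  stmt7_general ω hω c hc b f hsupp0
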